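/- arXiv:1205.1467 — 2 statements merged into one kernel-verified Lean document; each statement's English description precedes it below -/
import Mathlib

section
/- Let n be a positive integer, let b_l, b_r ∈ ℤ/n be such that b_r − b_l is a unit of ℤ/n, and let C be a subset of ℤ/n with b_l ∈ C and b_r ∈ C that is closed under both reflections x ↦ 2·b_l − x and x ↦ 2·b_r − x. Then C is all of ℤ/n. -/
/-!
Put `d = b_r - b_l`. Composing the two reflections translates by `±2d`, so the colours
`b_l + k d` with `k` even are reached from `b_l` and those with `k` odd from `b_r`; all
integer multiples of `d` therefore occur. As `d` is a unit and every element of `ℤ/n` is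
the image of an integer, every `x` has the form `b_l + k d`.
-/

section Reflections

variable {R : Type*} [Ring R] {C : Set R} {a b : R}

theorem add_two_mul_intCast_mul_sub_mem (hrefl_a : ∀ x ∈ C, 2 * a - x ∈ C)
    (hrefl_b : ∀ x ∈ C, 2 * b - x ∈ C) {x : R} (hx : x ∈ C) (q : ℤ) :
    x + 2 * q * (b - a) ∈ C := by
  induction q using Int.induction_on with
  | zero => simpa using hx
  | succ q ih =>
    convert hrefl_b _ (hrefl_a _ ih) using 1
    push_cast
    noncomm_ring
  | pred q ih =>
    convert hrefl_a _ (hrefl_b _ ih) using 1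
    push_cast
    noncomm_ring

theorem add_intCast_mul_sub_mem (ha : a ∈ C) (hb : b ∈ C)
    (hrefl_a : ∀ x ∈ C, 2 * a - x ∈ C) (hrefl_b : ∀ x ∈ C, 2 * b - x ∈ C) (k : ℤ) :
    a + k * (b - a) ∈ C := by
  obtain ⟨q, rfl | rfl⟩ := Int.even_or_odd' k
  · convert add_two_mul_intCast_mul_sub_mem hrefl_a hrefl_b ha q using 1
    push_cast
    noncomm_ring
  · convert add_two_mul_intCast_mul_sub_mem hrefl_a hrefl_b hb q using 1
    push_cast
    noncomm_ring

end Reflections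

theorem statement_1_general (n : ℕ) (bl br : ZMod n) (hu : IsUnit (br - bl))
    (C : Set (ZMod n)) (hbl : bl ∈ C) (hbr : br ∈ C)
    (hl : ∀ x ∈ C, 2 * bl - x ∈ C) (hr : ∀ x ∈ C, 2 * br - x ∈ C) :
    C = Set.univ := by
  refine Set.eq_univ_of_forall fun x => ?_
  obtain ⟨k, hk⟩ := ZMod.intCast_surjective (((hu.unit⁻¹ : (ZMod n)ˣ) : ZMod n) * (x - bl))
  have hx : x = bl + k * (br - bl) := by
    rw [hk, mul_comm, ← mul_assoc, IsUnit.mul_val_inv, one_mul, add_sub_cancel]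
  rw [hx]
  exact add_intCast_mul_sub_mem hbl hbr hl hr k

/-- Let `n` be a positive integer, `b_l, b_r ∈ ℤ/n` with `b_r - b_l` a unit, and let
`C ⊆ ℤ/n` contain `b_l` and `b_r` and be closed under the reflections
`x ↦ 2·b_l - x` and `x ↦ 2·b_r - x`. Then `C = ℤ/n`. -/
theorem statement_1 (n : ℕ) (hn : 0 < n) (bl br : ZMod n) (hu : IsUnit (br - bl))
    (C : Set (ZMod n)) (hbl : bl ∈ C) (hbr : br ∈ C)
    (hl : ∀ x ∈ C, 2 * bl - x ∈ C) (hr : ∀ x ∈ C, 2 * br - x ∈ C) :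
    C = Set.univ :=
  statement_1_general n bl br hu C hbl hbr hl hr
end

section
/- Let p be an odd prime, let b_l, b_r ∈ ℤ/p with b_l ≠ b_r, and let C be a subset of ℤ/p with b_l ∈ C and b_r ∈ C that is closed under both reflections x ↦ 2·b_l − x and x ↦ 2·b_r − x. Then C is all of ℤ/p. -/
/-- Let `p` be an odd prime, `b_l ≠ b_r` in `ℤ/p`, and let `C ⊆ ℤ/p` contain `b_l` and
`b_r` and be closed under the reflections `x ↦ 2·b_l - x` and `x ↦ 2·b_r - x`.
Then `C = ℤ/p`. -/
theorem statement_2 (p : ℕ) (hp : p.Prime) (hodd : Odd p) (bl br : ZMod p)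
    (hne : bl ≠ br) (C : Set (ZMod p)) (hbl : bl ∈ C) (hbr : br ∈ C)
    (hl : ∀ x ∈ C, 2 * bl - x ∈ C) (hr : ∀ x ∈ C, 2 * br - x ∈ C) :
    C = Set.univ := by
  haveI : Fact p.Prime := ⟨hp⟩
  set d : ZMod p := 2 * (br - bl) with hd
  have h2 : (2 : ZMod p) ≠ 0 := by
    intro h
    have : ((2 : ℕ) : ZMod p) = 0 := by push_cast; exact h
    rw [ZMod.natCast_eq_zero_iff] at this
    have hp2 := (Nat.prime_dvd_prime_iff_eq hp Nat.prime_two).mp this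
    rcases hodd with ⟨k, hk⟩
    omega
  have hdne : d ≠ 0 := by
    simp only [hd]
    intro h
    rcases mul_eq_zero.mp h with h | h
    · exact h2 h
    · exact hne (sub_eq_zero.mp h).symm
  have step : ∀ x ∈ C, x + d ∈ C := by
    intro x hx
    have := hr _ (hl x hx)
    have heq : 2 * br - (2 * bl - x) = x + d := by ring
    rwa [heq] at this
  have hn : ∀ n : ℕ, bl + n * d ∈ C := by
    intro n
    induction n with
    | zero => simpa using hbl
    | succ n ih =>
        have := step _ ih
        have heq : bl + n * d + d = bl + (n + 1 : ℕ) * d := by push_cast; ring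
        rwa [heq] at this
  ext y
  simp only [Set.mem_univ, iff_true]
  set n : ZMod p := (y - bl) * d⁻¹ with hn'
  have := hn n.val
  rwa [ZMod.natCast_val, ZMod.cast_id, hn', mul_assoc,
    inv_mul_cancel₀ hdne, mul_one, add_sub_cancel] at this
end
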